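/- arXiv:1401.0401 — 2 statements merged into one kernel-verified Lean document; each statement's English description precedes it below -/
import Mathlib

section
/- For a hyperbolic triangle with vertex angles θ_1, θ_2, θ_3 and opposite side lengths l_1, l_2, l_3, where the sides are the inversive-distance circle packing lengths cosh l_k = η_{ij} sinh r_i sinh r_j + cosh r_i cosh r_j (with fixed η's), treating θ_1, θ_2 as functions of u_1 = log tanh(r_1/2), u_2 = log tanh(r_2/2) via the hyperbolic cosine law, the mixed partial derivatives agree: ∂θ_1/∂u_2 = ∂θ_2/∂u_1, and both equal [(cosh l_1 cosh l_3 − cosh l_2) cosh r_1 + (cosh l_2 cosh l_3 − cosh l_1) cosh r_2 − sinh²l_3 cosh r_3] / (√N · sinh²l_3), where N = 1 + 2 cosh l_1 cosh l_2 cosh l_3 − cosh²l_1 − cosh²l_2 − cosh²l_3. -/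
/-! Since `tanh (r / 2) = exp u` forces `sinh r = -1 / sinh u`, the radius is a smooth
function of `u` with `dr/du = sinh r`. For an edge with
`cosh l = η sinh rᵢ sinh rⱼ + cosh rᵢ cosh rⱼ` this gives
`∂(cosh l)/∂uᵢ = cosh rᵢ cosh l - cosh rⱼ`, in which `η` no longer appears.
Differentiating the cosine law `cos θ = (cosh b cosh c - cosh a) / (sinh b sinh c)` along a
variation of `cosh a` and `cosh c`, using `sin θ = √N / (sinh b sinh c)`, and substituting
these edge derivatives expresses `∂θᵢ/∂uⱼ` by a formula that is symmetric in `i` and `j`. -/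

open Real Filter Topology

theorem sinh_mul_sinh_of_tanh_half_eq_exp {r u : ℝ} (h : tanh (r / 2) = exp u) :
    sinh r * sinh u = -1 ∧ cosh r * sinh u = -cosh u := by
  have hs : sinh (r / 2) = exp u * cosh (r / 2) := by
    rw [← h, tanh_eq_sinh_div_cosh, div_mul_cancel₀ _ (cosh_pos _).ne']
  have hp := cosh_sq_sub_sinh_sq (r / 2)
  rw [hs] at hp
  rw [show r = 2 * (r / 2) by ring, sinh_two_mul, cosh_two_mul, sinh_eq u, cosh_eq u, hs, exp_neg]
  constructor
  · field_simp
    linear_combination -hp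
  · field_simp
    linear_combination -(exp u ^ 2 + 1) * hp

theorem sinh_eq_neg_inv_of_tanh_half_eq_exp {r u : ℝ} (h : tanh (r / 2) = exp u) :
    sinh r = -(sinh u)⁻¹ :=
  neg_eq_iff_eq_neg.1 <| eq_inv_of_mul_eq_one_left <| by
    rw [neg_mul, (sinh_mul_sinh_of_tanh_half_eq_exp h).1, neg_neg]

theorem hasDerivAt_of_tanh_half_eq_exp {R : ℝ → ℝ} {u : ℝ}
    (hR : ∀ᶠ s in 𝓝 u, tanh (R s / 2) = exp s) : HasDerivAt R (sinh (R u)) u := by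
  obtain ⟨hsinh, hcosh⟩ := sinh_mul_sinh_of_tanh_half_eq_exp hR.self_of_nhds
  have hsu : sinh u ≠ 0 := by rintro h0; simp [h0] at hsinh
  have hRe : (fun s => arsinh (-(sinh s)⁻¹)) =ᶠ[𝓝 u] R := by
    filter_upwards [hR] with s hs
    rw [← sinh_eq_neg_inv_of_tanh_half_eq_exp hs, arsinh_sinh]
  refine (((hasDerivAt_sinh u).inv hsu).neg.arsinh.congr_of_eventuallyEq hRe.symm).congr_deriv ?_
  simp only [Pi.neg_apply, Pi.inv_apply, smul_eq_mul]
  rw [← sinh_eq_neg_inv_of_tanh_half_eq_exp hR.self_of_nhds, ← cosh_sq',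
    sqrt_sq (cosh_pos _).le]
  field_simp
  linear_combination -(cosh (R u) * sinh u) * hsinh + hcosh

theorem hasDerivAt_cosh_of_inversiveDistance {R L : ℝ → ℝ} {η ρ u : ℝ}
    (hR : HasDerivAt R (sinh (R u)) u)
    (hL : ∀ s, cosh (L s) = η * sinh (R s) * sinh ρ + cosh (R s) * cosh ρ) :
    HasDerivAt (fun s => cosh (L s)) (cosh (R u) * cosh (L u) - cosh ρ) u := by
  simp only [hL]
  refine (((hR.sinh.const_mul η).mul_const _).add (hR.cosh.mul_const _)).congr_deriv ?_
  linear_combination -cosh ρ * cosh_sq_sub_sinh_sq (R u)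

/-- `det !![1, z, y; z, 1, x; y, x, 1]`: up to sign, the Gram determinant of the vertices (in the
hyperboloid model) of a hyperbolic triangle whose sides have hyperbolic cosines `x, y, z`. -/
def gramDet (x y z : ℝ) : ℝ := 1 + 2 * x * y * z - x ^ 2 - y ^ 2 - z ^ 2

theorem gramDet_swap (x y z : ℝ) : gramDet y x z = gramDet x y z := by
  unfold gramDet; ring

theorem gramDet_cosh (a b c : ℝ) :
    gramDet (cosh a) (cosh b) (cosh c) = (cosh (b + c) - cosh a) * (cosh a - cosh (b - c)) := by
  rw [gramDet, cosh_add, cosh_sub]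
  linear_combination sinh c ^ 2 * cosh_sq_sub_sinh_sq b + (cosh b ^ 2 - 1) * cosh_sq_sub_sinh_sq c

theorem gramDet_cosh_pos {a b c : ℝ} (hab : a < b + c) (hbc : b < c + a) (hca : c < a + b) :
    0 < gramDet (cosh a) (cosh b) (cosh c) := by
  rw [gramDet_cosh]
  have ha : 0 < a := by linarith
  refine mul_pos (sub_pos.2 (cosh_lt_cosh.2 ?_)) (sub_pos.2 (cosh_lt_cosh.2 ?_))
  · rw [abs_of_pos ha, abs_of_pos (by linarith)]; exact hab
  · rw [abs_of_pos ha]; exact abs_sub_lt_iff.2 ⟨by linarith, by linarith⟩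

theorem hasDerivAt_arccos_cosLaw {x z : ℝ → ℝ} {x' z' b u : ℝ} (hx : HasDerivAt x x' u)
    (hz : HasDerivAt z z' u) (hb : 0 < b) (hN : 0 < gramDet (x u) (cosh b) (z u)) :
    HasDerivAt (fun s => arccos ((cosh b * z s - x s) / (sinh b * √(z s ^ 2 - 1))))
      ((x' * (z u ^ 2 - 1) - z' * (x u * z u - cosh b)) /
        (√(gramDet (x u) (cosh b) (z u)) * (z u ^ 2 - 1))) u := by
  have hsb : 0 < sinh b := sinh_pos_iff.2 hb
  have hgram : gramDet (x u) (cosh b) (z u)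
      = sinh b ^ 2 * (z u ^ 2 - 1) - (cosh b * z u - x u) ^ 2 := by
    rw [gramDet, sinh_sq]; ring
  have hz1 : 0 < z u ^ 2 - 1 :=
    pos_of_mul_pos_right (a := sinh b ^ 2) (by nlinarith [sq_nonneg (cosh b * z u - x u)])
      (sq_nonneg _)
  set w := √(z u ^ 2 - 1)
  have hw : 0 < w := sqrt_pos.2 hz1
  have hw2 : w ^ 2 = z u ^ 2 - 1 := sq_sqrt hz1.le
  set c := (cosh b * z u - x u) / (sinh b * w) with hc_def
  have hsin_sq : 1 - c ^ 2 = gramDet (x u) (cosh b) (z u) / (sinh b * w) ^ 2 := by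
    rw [hc_def, hgram, ← hw2]; field_simp
  have hc : |c| < 1 := by
    rw [← sq_lt_one_iff_abs_lt_one, ← sub_pos, hsin_sq]; positivity
  have hsin : √(1 - c ^ 2) = √(gramDet (x u) (cosh b) (z u)) / (sinh b * w) := by
    rw [hsin_sq, sqrt_div hN.le, sqrt_sq (by positivity)]
  have hw' : HasDerivAt (fun s => √(z s ^ 2 - 1)) (z u * z' / w) u :=
    (((hz.pow 2).sub_const 1).sqrt hz1.ne').congr_deriv <| by
      simp only [Pi.pow_apply]; field_simp; ring
  have hcos := ((hz.const_mul (cosh b)).sub hx).div (hw'.const_mul (sinh b)) (by positivity)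
  refine ((hasDerivAt_arccos (abs_lt.1 hc).1.ne' (abs_lt.1 hc).2.ne).comp u hcos).congr_deriv ?_
  rw [hsin]
  simp only [Pi.sub_apply]
  field_simp
  linear_combination (z' * (z u * x u - cosh b) - (z u ^ 2 - 1) * cosh b * z') * hw2

theorem hasDerivAt_angle_of_inversiveDistance {R Lopp Lvar : ℝ → ℝ} {η η' ρ ρ' b u : ℝ}
    (hR : HasDerivAt R (sinh (R u)) u)
    (hopp : ∀ s, cosh (Lopp s) = η * sinh (R s) * sinh ρ + cosh (R s) * cosh ρ)
    (hvar : ∀ s, cosh (Lvar s) = η' * sinh (R s) * sinh ρ' + cosh (R s) * cosh ρ')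
    (hvar_pos : ∀ s, 0 < Lvar s) (hb : 0 < b)
    (hN : 0 < gramDet (cosh (Lopp u)) (cosh b) (cosh (Lvar u))) :
    HasDerivAt
      (fun s => arccos ((cosh b * cosh (Lvar s) - cosh (Lopp s)) / (sinh b * sinh (Lvar s))))
      (((cosh (Lopp u) * cosh (Lvar u) - cosh b) * cosh ρ'
          + (cosh b * cosh (Lvar u) - cosh (Lopp u)) * cosh (R u) - sinh (Lvar u) ^ 2 * cosh ρ) /
        (√(gramDet (cosh (Lopp u)) (cosh b) (cosh (Lvar u))) * sinh (Lvar u) ^ 2)) u := by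
  have hsinh (s : ℝ) : √(cosh (Lvar s) ^ 2 - 1) = sinh (Lvar s) := by
    rw [← sinh_sq, sqrt_sq (sinh_pos_iff.2 (hvar_pos s)).le]
  have h := hasDerivAt_arccos_cosLaw (hasDerivAt_cosh_of_inversiveDistance hR hopp)
    (hasDerivAt_cosh_of_inversiveDistance hR hvar) hb hN
  simp only [hsinh] at h
  exact h.congr_deriv (by rw [sinh_sq]; ring)

theorem stmt_15_general (η12 η23 η31 r3 : ℝ)
    (R : ℝ → ℝ) (hR : ∀ u : ℝ, u < 0 → 0 < R u ∧ Real.tanh (R u / 2) = Real.exp u)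
    (L1 : ℝ → ℝ)
    (hL1 : ∀ u2, 0 < L1 u2 ∧
      Real.cosh (L1 u2) = η23 * Real.sinh (R u2) * Real.sinh r3 + Real.cosh (R u2) * Real.cosh r3)
    (L2 : ℝ → ℝ)
    (hL2 : ∀ u1, 0 < L2 u1 ∧
      Real.cosh (L2 u1) = η31 * Real.sinh r3 * Real.sinh (R u1) + Real.cosh r3 * Real.cosh (R u1))
    (L3 : ℝ → ℝ → ℝ)
    (hL3 : ∀ u1 u2, 0 < L3 u1 u2 ∧
      Real.cosh (L3 u1 u2) = η12 * Real.sinh (R u1) * Real.sinh (R u2) + Real.cosh (R u1) * Real.cosh (R u2))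
    (θ1 θ2 : ℝ → ℝ → ℝ)
    (hθ1 : ∀ u1 u2, θ1 u1 u2 = Real.arccos
      ((Real.cosh (L2 u1) * Real.cosh (L3 u1 u2) - Real.cosh (L1 u2)) /
        (Real.sinh (L2 u1) * Real.sinh (L3 u1 u2))))
    (hθ2 : ∀ u1 u2, θ2 u1 u2 = Real.arccos
      ((Real.cosh (L1 u2) * Real.cosh (L3 u1 u2) - Real.cosh (L2 u1)) /
        (Real.sinh (L1 u2) * Real.sinh (L3 u1 u2))))
    (u1 u2 : ℝ) (hu1 : u1 < 0) (hu2 : u2 < 0)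
    (htri : L1 u2 < L2 u1 + L3 u1 u2 ∧ L2 u1 < L1 u2 + L3 u1 u2 ∧ L3 u1 u2 < L1 u2 + L2 u1) :
    deriv (fun s => θ1 u1 s) u2 = deriv (fun s => θ2 s u2) u1 ∧
    deriv (fun s => θ1 u1 s) u2 =
      ((Real.cosh (L1 u2) * Real.cosh (L3 u1 u2) - Real.cosh (L2 u1)) * Real.cosh (R u1)
        + (Real.cosh (L2 u1) * Real.cosh (L3 u1 u2) - Real.cosh (L1 u2)) * Real.cosh (R u2)
        - Real.sinh (L3 u1 u2) ^ 2 * Real.cosh r3) /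
      (Real.sqrt (1 + 2 * Real.cosh (L1 u2) * Real.cosh (L2 u1) * Real.cosh (L3 u1 u2)
          - Real.cosh (L1 u2) ^ 2 - Real.cosh (L2 u1) ^ 2 - Real.cosh (L3 u1 u2) ^ 2)
        * Real.sinh (L3 u1 u2) ^ 2) := by
  obtain ⟨h1, h2, h3⟩ := htri
  have hR' {u : ℝ} (hu : u < 0) : HasDerivAt R (sinh (R u)) u :=
    hasDerivAt_of_tanh_half_eq_exp ((eventually_lt_nhds hu).mono fun s hs => (hR s hs).2)
  have hN : 0 < gramDet (cosh (L1 u2)) (cosh (L2 u1)) (cosh (L3 u1 u2)) :=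
    gramDet_cosh_pos h1 (by linarith) h3
  have hd1 := hasDerivAt_angle_of_inversiveDistance (hR' hu2) (fun s => (hL1 s).2)
    (fun s => by rw [(hL3 u1 s).2]; ring) (fun s => (hL3 u1 s).1) (by linarith) hN
  have hd2 := hasDerivAt_angle_of_inversiveDistance (Lopp := L2) (Lvar := fun s => L3 s u2)
    (b := L1 u2) (hR' hu1) (fun s => by rw [(hL2 s).2]; ring) (fun s => (hL3 s u2).2)
    (fun s => (hL3 s u2).1) (by linarith) (by rw [gramDet_swap]; exact hN)
  simp only [hθ1, hθ2]
  refine ⟨hd1.deriv.trans (hd2.deriv.trans ?_).symm, hd1.deriv⟩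
  rw [gramDet_swap]
  ring

theorem stmt_15 (η12 η23 η31 r3 : ℝ) (hr3 : 0 < r3)
    (R : ℝ → ℝ) (hR : ∀ u : ℝ, u < 0 → 0 < R u ∧ Real.tanh (R u / 2) = Real.exp u)
    (L1 : ℝ → ℝ)
    (hL1 : ∀ u2, 0 < L1 u2 ∧
      Real.cosh (L1 u2) = η23 * Real.sinh (R u2) * Real.sinh r3 + Real.cosh (R u2) * Real.cosh r3)
    (L2 : ℝ → ℝ)
    (hL2 : ∀ u1, 0 < L2 u1 ∧
      Real.cosh (L2 u1) = η31 * Real.sinh r3 * Real.sinh (R u1) + Real.cosh r3 * Real.cosh (R u1))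
    (L3 : ℝ → ℝ → ℝ)
    (hL3 : ∀ u1 u2, 0 < L3 u1 u2 ∧
      Real.cosh (L3 u1 u2) = η12 * Real.sinh (R u1) * Real.sinh (R u2) + Real.cosh (R u1) * Real.cosh (R u2))
    (θ1 θ2 : ℝ → ℝ → ℝ)
    (hθ1 : ∀ u1 u2, θ1 u1 u2 = Real.arccos
      ((Real.cosh (L2 u1) * Real.cosh (L3 u1 u2) - Real.cosh (L1 u2)) /
        (Real.sinh (L2 u1) * Real.sinh (L3 u1 u2))))
    (hθ2 : ∀ u1 u2, θ2 u1 u2 = Real.arccos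
      ((Real.cosh (L1 u2) * Real.cosh (L3 u1 u2) - Real.cosh (L2 u1)) /
        (Real.sinh (L1 u2) * Real.sinh (L3 u1 u2))))
    (u1 u2 : ℝ) (hu1 : u1 < 0) (hu2 : u2 < 0)
    (htri : L1 u2 < L2 u1 + L3 u1 u2 ∧ L2 u1 < L1 u2 + L3 u1 u2 ∧ L3 u1 u2 < L1 u2 + L2 u1) :
    deriv (fun s => θ1 u1 s) u2 = deriv (fun s => θ2 s u2) u1 ∧
    deriv (fun s => θ1 u1 s) u2 =
      ((Real.cosh (L1 u2) * Real.cosh (L3 u1 u2) - Real.cosh (L2 u1)) * Real.cosh (R u1)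
        + (Real.cosh (L2 u1) * Real.cosh (L3 u1 u2) - Real.cosh (L1 u2)) * Real.cosh (R u2)
        - Real.sinh (L3 u1 u2) ^ 2 * Real.cosh r3) /
      (Real.sqrt (1 + 2 * Real.cosh (L1 u2) * Real.cosh (L2 u1) * Real.cosh (L3 u1 u2)
          - Real.cosh (L1 u2) ^ 2 - Real.cosh (L2 u1) ^ 2 - Real.cosh (L3 u1 u2) ^ 2)
        * Real.sinh (L3 u1 u2) ^ 2) :=
  stmt_15_general η12 η23 η31 r3 R hR L1 hL1 L2 hL2 L3 hL3 θ1 θ2 hθ1 hθ2 u1 u2 hu1 hu2 htri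
end

section
/- For a Euclidean triangle with angles θ_i, θ_j, θ_k viewed as smooth functions of conformal factors (u_i, u_j, u_k) under any unified circle packing scheme (edge lengths l_{ij}² = 2η_{ij}e^{u_i+u_j} + ε_i e^{2u_i} + ε_j e^{2u_j}), the Jacobian matrix ∂(θ_i,θ_j,θ_k)/∂(u_i,u_j,u_k) equals −(1/(2A)) L Θ L^{−1} D, where A = (1/2) sin θ_i · l_j · l_k, L = diag(l_i, l_j, l_k), Θ is the symmetric matrix with −1 on the diagonal and cos θ_k, cos θ_j, cos θ_i in the appropriate off-diagonal positions, and D has zero diagonal and entries τ(a,b,c) = (1/2)(l_a² + ε_b γ_b² − ε_c γ_c²); in particular ∂θ_i/∂u_j = ∂θ_j/∂u_i. -/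
/-!
Write `x_a = l_a²`. By the law of cosines each angle is a function of `x` alone, and
differentiating the arccos gives `∂θ_a/∂x_a = 1/(4A)` and
`∂θ_a/∂x_c = -(l_a cos θ_d / l_c)/(4A)` for `{a, c, d} = {i, j, k}`, where `16A²` is Heron's
expression in `x`; that is, `∂θ/∂x = -(1/(4A)) L Θ L⁻¹`. On the other hand the circle packing
formula gives `∂x_c/∂u_b = 2 τ(c, b)` directly, so the chain rule yields
`J = -(1/(2A)) L Θ L⁻¹ D`. The symmetry of `J` is then a polynomial identity in the `x_a` and
`ε_a γ_a²`.
-/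

open Real Matrix

namespace CirclePacking

section Fin3

variable (a : Fin 3)

theorem fin3_cases (c : Fin 3) : c = a ∨ c = a + 1 ∨ c = a + 2 := by revert a c; decide
theorem add_one_add_one : a + 1 + 1 = a + 2 := by revert a; decide
theorem add_one_add_two : a + 1 + 2 = a := by revert a; decide
theorem add_two_add_one : a + 2 + 1 = a := by revert a; decide
theorem add_two_add_two : a + 2 + 2 = a + 1 := by revert a; decide
theorem neg_add_add_one : -(a + (a + 1)) = a + 2 := by revert a; decide
theorem neg_add_add_two : -(a + (a + 2)) = a + 1 := by revert a; decide
theorem add_one_ne : a + 1 ≠ a := by revert a; decide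
theorem add_two_ne : a + 2 ≠ a := by revert a; decide
theorem add_two_ne_add_one : a + 2 ≠ a + 1 := by revert a; decide

theorem sum_fin3_rotate {M : Type*} [AddCommMonoid M] (f : Fin 3 → M) :
    ∑ c, f c = f a + f (a + 1) + f (a + 2) := by
  fin_cases a <;> simp [Fin.sum_univ_three] <;> abel

end Fin3

theorem diagonal_mul_mul_inv_diagonal_apply {n K : Type*} [Fintype n] [DecidableEq n]
    [Field K] {v : n → K} (hv : ∀ i, v i ≠ 0) (M : Matrix n n K) (i j : n) :
    (diagonal v * M * (diagonal v)⁻¹) i j = v i * M i j / v j := by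
  have hinv : (diagonal v)⁻¹ = diagonal fun i => (v i)⁻¹ :=
    inv_eq_right_inv (by simp [diagonal_mul_diagonal, hv])
  rw [hinv, mul_diagonal, diagonal_mul, div_eq_mul_inv]

section Triangle

/-- Sixteen times the squared area of a triangle with squared side lengths `x`, `y`, `z`. -/
def heron (x y z : ℝ) : ℝ := 2 * (x * y + y * z + z * x) - x ^ 2 - y ^ 2 - z ^ 2

theorem heron_sq_pos {p q r : ℝ} (h₁ : p < q + r) (h₂ : q < r + p) (h₃ : r < p + q) :
    0 < heron (p ^ 2) (q ^ 2) (r ^ 2) := by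
  have hfac : heron (p ^ 2) (q ^ 2) (r ^ 2)
      = (p + q + r) * (q + r - p) * (r + p - q) * (p + q - r) := by
    unfold heron; ring
  have := sub_pos.2 h₁; have := sub_pos.2 h₂; have := sub_pos.2 h₃
  have : 0 < p + q + r := by linarith
  rw [hfac]; positivity

theorem heron_rotate (x : Fin 3 → ℝ) (a : Fin 3) :
    heron (x a) (x (a + 1)) (x (a + 2)) = heron (x 0) (x 1) (x 2) := by
  fin_cases a <;> simp <;> unfold heron <;> ring

theorem one_sub_sq_lawOfCosines (x : ℝ) {y z : ℝ} (hy : 0 < y) (hz : 0 < z) :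
    1 - ((y + z - x) / (2 * √y * √z)) ^ 2 = heron x y z / (2 * √y * √z) ^ 2 := by
  rw [div_pow, mul_pow, mul_pow, sq_sqrt hy.le, sq_sqrt hz.le]
  field_simp
  unfold heron; ring

theorem sqrt_one_sub_sq_lawOfCosines (x : ℝ) {y z : ℝ} (hy : 0 < y) (hz : 0 < z) :
    √(1 - ((y + z - x) / (2 * √y * √z)) ^ 2) = √(heron x y z) / (2 * √y * √z) := by
  rw [one_sub_sq_lawOfCosines x hy hz, sqrt_div' _ (by positivity), sqrt_sq (by positivity)]

theorem abs_lawOfCosines_lt_one {x y z : ℝ} (hy : 0 < y) (hz : 0 < z) (hS : 0 < heron x y z) :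
    |(y + z - x) / (2 * √y * √z)| < 1 := by
  rw [← sq_lt_one_iff_abs_lt_one, ← sub_pos, one_sub_sq_lawOfCosines x hy hz]
  positivity

theorem HasDerivAt.arccos_lawOfCosines {x y z : ℝ → ℝ} {x' y' z' s : ℝ}
    (hx : HasDerivAt x x' s) (hy : HasDerivAt y y' s) (hz : HasDerivAt z z' s)
    (hy₀ : 0 < y s) (hz₀ : 0 < z s) (hS : 0 < heron (x s) (y s) (z s)) :
    HasDerivAt (fun t => arccos ((y t + z t - x t) / (2 * √(y t) * √(z t))))
      ((x' - (x s + y s - z s) / (2 * y s) * y' - (x s + z s - y s) / (2 * z s) * z')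
        / √(heron (x s) (y s) (z s))) s := by
  have hc := ((hy.add hz).sub hx).div (((hy.sqrt hy₀.ne').const_mul 2).mul (hz.sqrt hz₀.ne'))
    (by simp only [Pi.mul_apply]; positivity)
  have hb := abs_lt.1 (abs_lawOfCosines_lt_one hy₀ hz₀ hS)
  refine ((hasDerivAt_arccos hb.1.ne' hb.2.ne).comp s hc).congr_deriv ?_
  simp only [Pi.add_apply, Pi.sub_apply, Pi.mul_apply]
  rw [sqrt_one_sub_sq_lawOfCosines _ hy₀ hz₀]
  have hq := sq_sqrt hy₀.le
  have hr := sq_sqrt hz₀.le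
  have hq₀ := sqrt_pos.2 hy₀
  have hr₀ := sqrt_pos.2 hz₀
  have hR := (sqrt_pos.2 hS).ne'
  clear hc hb
  generalize √(heron (x s) (y s) (z s)) = R at *
  generalize √(y s) = q at *
  generalize √(z s) = r at *
  rw [← hq, ← hr]
  field_simp
  ring

/-- The angle at vertex `a` of the triangle with squared side lengths `x`, side `a` being
opposite vertex `a`. -/
noncomputable def angle (x : Fin 3 → ℝ) (a : Fin 3) : ℝ :=
  arccos ((x (a + 1) + x (a + 2) - x a) / (2 * √(x (a + 1)) * √(x (a + 2))))

theorem cos_angle {x : Fin 3 → ℝ} (hx : ∀ c, 0 < x c) (hS : 0 < heron (x 0) (x 1) (x 2))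
    (a : Fin 3) :
    cos (angle x a) = (x (a + 1) + x (a + 2) - x a) / (2 * √(x (a + 1)) * √(x (a + 2))) := by
  rw [← heron_rotate] at hS
  have hb := abs_le.1 (abs_lawOfCosines_lt_one (hx _) (hx _) hS).le
  exact cos_arccos hb.1 hb.2

theorem sin_angle {x : Fin 3 → ℝ} (hx : ∀ c, 0 < x c) (a : Fin 3) :
    sin (angle x a) = √(heron (x 0) (x 1) (x 2)) / (2 * √(x (a + 1)) * √(x (a + 2))) := by
  rw [angle, sin_arccos, sqrt_one_sub_sq_lawOfCosines _ (hx _) (hx _), heron_rotate]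

theorem half_sin_angle_mul_sqrt_mul_sqrt {x : Fin 3 → ℝ} (hx : ∀ c, 0 < x c) :
    1 / 2 * sin (angle x 0) * √(x 1) * √(x 2) = √(heron (x 0) (x 1) (x 2)) / 4 := by
  rw [sin_angle hx, zero_add, zero_add]
  have := sqrt_pos.2 (hx 1)
  have := sqrt_pos.2 (hx 2)
  field_simp
  ring

/-- The matrix of partial derivatives `∂ angle x a / ∂ x c`. -/
noncomputable def angleGrad (x : Fin 3 → ℝ) : Matrix (Fin 3) (Fin 3) ℝ :=
  Matrix.of fun a c =>
    (if c = a then 1 else -((x a + x c - x (-(a + c))) / (2 * x c))) / √(heron (x 0) (x 1) (x 2))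

theorem hasDerivAt_angle {x : ℝ → Fin 3 → ℝ} {x' : Fin 3 → ℝ} {s : ℝ}
    (hx : ∀ c, HasDerivAt (fun t => x t c) (x' c) s) (hpos : ∀ c, 0 < x s c)
    (hS : 0 < heron (x s 0) (x s 1) (x s 2)) (a : Fin 3) :
    HasDerivAt (fun t => angle (x t) a) (∑ c, angleGrad (x s) a c * x' c) s := by
  rw [← heron_rotate _ a] at hS
  refine (HasDerivAt.arccos_lawOfCosines (hx a) (hx (a + 1)) (hx (a + 2))
    (hpos _) (hpos _) hS).congr_deriv ?_
  simp only [sum_fin3_rotate a, angleGrad, of_apply, if_pos, if_neg (add_one_ne a),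
    if_neg (add_two_ne a), neg_add_add_one, neg_add_add_two, heron_rotate]
  ring

/-- The matrix `Θ`. -/
noncomputable def angleCos (x : Fin 3 → ℝ) : Matrix (Fin 3) (Fin 3) ℝ :=
  Matrix.of fun a c => if a = c then -1 else cos (angle x (-(a + c)))

theorem angleGrad_eq {x : Fin 3 → ℝ} (hx : ∀ c, 0 < x c) (hS : 0 < heron (x 0) (x 1) (x 2)) :
    angleGrad x = (-(1 / √(heron (x 0) (x 1) (x 2))))
      • (diagonal (fun c => √(x c)) * angleCos x * (diagonal fun c => √(x c))⁻¹) := by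
  ext a c
  rw [Matrix.smul_apply, smul_eq_mul,
    diagonal_mul_mul_inv_diagonal_apply (fun c => (sqrt_pos.2 (hx c)).ne')]
  have hsq (c : Fin 3) : √(x c) ^ 2 = x c := sq_sqrt (hx c).le
  have hsqrt (c : Fin 3) : 0 < √(x c) := sqrt_pos.2 (hx c)
  have hS' := (sqrt_pos.2 hS).ne'
  rcases fin3_cases a c with rfl | rfl | rfl
  · have := (hsqrt c).ne'
    simp only [angleGrad, angleCos, of_apply, if_true]
    field_simp
  · have := hsqrt a; have := hsqrt (a + 1); have := hx (a + 1)
    simp only [angleGrad, angleCos, of_apply, if_neg (add_one_ne a), if_neg (add_one_ne a).symm,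
      neg_add_add_one, cos_angle hx hS, add_two_add_one, add_two_add_two]
    field_simp
    rw [hsq]
    ring
  · have := hsqrt a; have := hsqrt (a + 2); have := hx (a + 2)
    simp only [angleGrad, angleCos, of_apply, if_neg (add_two_ne a), if_neg (add_two_ne a).symm,
      neg_add_add_two, cos_angle hx hS, add_one_add_one, add_one_add_two]
    field_simp
    rw [hsq]
    ring

end Triangle

section Packing

variable (η ε u : Fin 3 → ℝ)

/-- The squared edge length `l_a²`. -/
noncomputable def sqLen (a : Fin 3) : ℝ :=
  2 * η a * exp (u (a + 1) + u (a + 2)) + ε (a + 1) * exp (2 * u (a + 1))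
    + ε (a + 2) * exp (2 * u (a + 2))

/-- The matrix `D` of the values `τ(a, b, c)`, with `c = -(a + b)` the third index. -/
noncomputable def tau : Matrix (Fin 3) (Fin 3) ℝ :=
  Matrix.of fun a b => if a = b then 0 else
    (1 / 2) * (sqLen η ε u a + ε b * exp (u b) ^ 2 - ε (-(a + b)) * exp (u (-(a + b))) ^ 2)

theorem hasDerivAt_sqLen_update (b c : Fin 3) :
    HasDerivAt (fun s => sqLen η ε (Function.update u b s) c) (2 * tau η ε u c b) (u b) := by
  have hu (i : Fin 3) :
      HasDerivAt (fun s => Function.update u b s i) ((Pi.single b 1 : Fin 3 → ℝ) i) (u b) :=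
    hasDerivAt_pi.1 (hasDerivAt_update u b (u b)) i
  have h := ((((hu (c + 1)).add (hu (c + 2))).exp.const_mul (2 * η c)).add
    (((hu (c + 1)).const_mul 2).exp.const_mul (ε (c + 1)))).add
    (((hu (c + 2)).const_mul 2).exp.const_mul (ε (c + 2)))
  refine h.congr_deriv ?_
  have hsq (x : ℝ) : exp x ^ 2 = exp (2 * x) := by rw [sq, ← exp_add, two_mul]
  simp only [Pi.add_apply, Function.update_eq_self, tau, of_apply, sqLen]
  rcases fin3_cases c b with rfl | rfl | rfl
  · simp only [Pi.single_eq_of_ne (add_one_ne b), Pi.single_eq_of_ne (add_two_ne b), if_true]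
    ring
  · simp only [Pi.single_eq_same, Pi.single_eq_of_ne (add_two_ne_add_one c),
      if_neg (add_one_ne c).symm, neg_add_add_one, hsq]
    ring
  · simp only [Pi.single_eq_same, Pi.single_eq_of_ne (add_two_ne_add_one c).symm,
      if_neg (add_two_ne c).symm, neg_add_add_two, hsq]
    ring

variable {η ε}

theorem hasDerivAt_angle_sqLen_update (hpos : ∀ c, 0 < sqLen η ε u c)
    (hS : 0 < heron (sqLen η ε u 0) (sqLen η ε u 1) (sqLen η ε u 2)) (a b : Fin 3) :
    HasDerivAt (fun s => angle (sqLen η ε (Function.update u b s)) a)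
      ((angleGrad (sqLen η ε u) * ((2 : ℝ) • tau η ε u)) a b) (u b) := by
  have h := hasDerivAt_angle (x := fun s => sqLen η ε (Function.update u b s))
    (hasDerivAt_sqLen_update η ε u b) (by simpa only [Function.update_eq_self] using hpos)
    (by simpa only [Function.update_eq_self] using hS) a
  simp only [Function.update_eq_self] at h
  simpa only [mul_apply, Matrix.smul_apply, smul_eq_mul] using h

theorem isSymm_angleGrad_mul_tau (hpos : ∀ c, 0 < sqLen η ε u c) :
    (angleGrad (sqLen η ε u) * tau η ε u).IsSymm := by
  refine IsSymm.ext fun a b => ?_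
  have := hpos 0; have := hpos 1; have := hpos 2
  have hneg₁ : (-1 : Fin 3) = 2 := rfl
  have hneg₂ : (-2 : Fin 3) = 1 := rfl
  fin_cases a <;> fin_cases b <;>
    simp only [mul_apply, Fin.sum_univ_three, angleGrad, tau, of_apply, Fin.reduceAdd, Fin.reduceFinMk,
      Fin.isValue, Fin.reduceEq, neg_zero, hneg₁, hneg₂, ↓reduceIte, mul_zero, zero_add, add_zero] <;>
    field_simp <;> ring

end Packing

end CirclePacking

open CirclePacking in
theorem stmt_16_general (η ε : Fin 3 → ℝ)
    (l : (Fin 3 → ℝ) → Fin 3 → ℝ)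
    (hl : ∀ u a, l u a = Real.sqrt (2 * η a * Real.exp (u (a + 1) + u (a + 2))
      + ε (a + 1) * Real.exp (2 * u (a + 1)) + ε (a + 2) * Real.exp (2 * u (a + 2))))
    (hpos : ∀ (u : Fin 3 → ℝ) (a : Fin 3),
      0 < 2 * η a * Real.exp (u (a + 1) + u (a + 2))
        + ε (a + 1) * Real.exp (2 * u (a + 1)) + ε (a + 2) * Real.exp (2 * u (a + 2)))
    (htri : ∀ u a, l u a < l u (a + 1) + l u (a + 2))
    (θ : (Fin 3 → ℝ) → Fin 3 → ℝ)
    (hθ : ∀ u a, θ u a = Real.arccos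
      ((l u (a + 1) ^ 2 + l u (a + 2) ^ 2 - l u a ^ 2) / (2 * l u (a + 1) * l u (a + 2))))
    (u : Fin 3 → ℝ)
    (J : Matrix (Fin 3) (Fin 3) ℝ)
    (hJ : ∀ a b, J a b = deriv (fun s => θ (Function.update u b s) a) (u b))
    (A : ℝ) (hA : A = (1 / 2) * Real.sin (θ u 0) * l u 1 * l u 2)
    (Lm Θm Dm : Matrix (Fin 3) (Fin 3) ℝ)
    (hLm : Lm = Matrix.diagonal (fun a => l u a))
    (hΘm : ∀ a b, Θm a b = if a = b then -1 else Real.cos (θ u (-(a + b))))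
    (hDm : ∀ a b, Dm a b = if a = b then 0 else
      (1 / 2) * (l u a ^ 2 + ε b * Real.exp (u b) ^ 2
        - ε (-(a + b)) * Real.exp (u (-(a + b))) ^ 2)) :
    J = (-(1 / (2 * A))) • (Lm * Θm * Lm⁻¹ * Dm) ∧ J 0 1 = J 1 0 := by
  have hsqLen : ∀ v c, 0 < sqLen η ε v c := hpos
  have hl' : ∀ v c, l v c = √(sqLen η ε v c) := hl
  have hl2 (v : Fin 3 → ℝ) (c : Fin 3) : l v c ^ 2 = sqLen η ε v c := by
    rw [hl']; exact sq_sqrt (hsqLen v c).le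
  have hθ' (v : Fin 3 → ℝ) : θ v = angle (sqLen η ε v) := by
    funext a; rw [hθ]; simp only [hl2]; rw [hl', hl']; rfl
  have hS : 0 < heron (sqLen η ε u 0) (sqLen η ε u 1) (sqLen η ε u 2) := by
    simpa only [hl2, zero_add] using heron_sq_pos (htri u 0) (htri u 1) (htri u 2)
  have hJ' : J = angleGrad (sqLen η ε u) * ((2 : ℝ) • tau η ε u) := by
    ext a b
    rw [hJ]; simp only [hθ']
    exact (hasDerivAt_angle_sqLen_update u (hsqLen u) hS a b).deriv
  have hA' : A = √(heron (sqLen η ε u 0) (sqLen η ε u 1) (sqLen η ε u 2)) / 4 := by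
    rw [hA, hθ', hl', hl', half_sin_angle_mul_sqrt_mul_sqrt (hsqLen u)]
  have hLm' : Lm = diagonal fun c => √(sqLen η ε u c) := by
    rw [hLm]; simp only [hl']
  have hΘm' : Θm = angleCos (sqLen η ε u) := by
    ext a b; rw [hΘm, hθ']; rfl
  have hDm' : Dm = tau η ε u := by
    ext a b; rw [hDm, hl2]; rfl
  refine ⟨?_, ?_⟩
  · rw [hJ', angleGrad_eq (hsqLen u) hS, hA', hLm', hΘm', hDm', Matrix.smul_mul, Matrix.mul_smul,
      smul_smul]
    congr 1
    field_simp
    norm_num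
  · rw [hJ', Matrix.mul_smul, Matrix.smul_apply, Matrix.smul_apply,
      (isSymm_angleGrad_mul_tau u (hsqLen u)).apply]

theorem stmt_16 (η ε : Fin 3 → ℝ) (hε : ∀ a, ε a ∈ ({-1, 0, 1} : Set ℝ))
    (l : (Fin 3 → ℝ) → Fin 3 → ℝ)
    (hl : ∀ u a, l u a = Real.sqrt (2 * η a * Real.exp (u (a + 1) + u (a + 2))
      + ε (a + 1) * Real.exp (2 * u (a + 1)) + ε (a + 2) * Real.exp (2 * u (a + 2))))
    (hpos : ∀ (u : Fin 3 → ℝ) (a : Fin 3),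
      0 < 2 * η a * Real.exp (u (a + 1) + u (a + 2))
        + ε (a + 1) * Real.exp (2 * u (a + 1)) + ε (a + 2) * Real.exp (2 * u (a + 2)))
    (htri : ∀ u a, l u a < l u (a + 1) + l u (a + 2))
    (θ : (Fin 3 → ℝ) → Fin 3 → ℝ)
    (hθ : ∀ u a, θ u a = Real.arccos
      ((l u (a + 1) ^ 2 + l u (a + 2) ^ 2 - l u a ^ 2) / (2 * l u (a + 1) * l u (a + 2))))
    (u : Fin 3 → ℝ)
    (J : Matrix (Fin 3) (Fin 3) ℝ)
    (hJ : ∀ a b, J a b = deriv (fun s => θ (Function.update u b s) a) (u b))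
    (A : ℝ) (hA : A = (1 / 2) * Real.sin (θ u 0) * l u 1 * l u 2)
    (Lm Θm Dm : Matrix (Fin 3) (Fin 3) ℝ)
    (hLm : Lm = Matrix.diagonal (fun a => l u a))
    (hΘm : ∀ a b, Θm a b = if a = b then -1 else Real.cos (θ u (-(a + b))))
    (hDm : ∀ a b, Dm a b = if a = b then 0 else
      (1 / 2) * (l u a ^ 2 + ε b * Real.exp (u b) ^ 2
        - ε (-(a + b)) * Real.exp (u (-(a + b))) ^ 2)) :
    J = (-(1 / (2 * A))) • (Lm * Θm * Lm⁻¹ * Dm) ∧ J 0 1 = J 1 0 :=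
  stmt_16_general η ε l hl hpos htri θ hθ u J hJ A hA Lm Θm Dm hLm hΘm hDm
end
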